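/- arXiv:1510.08207 — 5 statements merged into one kernel-verified Lean document; each statement's English description precedes it below -/
import Mathlib

section
/- If R is a noncommutative finite (not necessarily unital) ring, then |Cent(R)| ≥ 4. -/
/-! If `x` and `y` do not commute, then neither do any two of `x`, `y`, `x + y`, so the
centralizers of `0`, `x`, `y`, `x + y` are pairwise distinct: `C(0) = R` contains everything,
while each of the other three contains its own generator but not the other two. -/

/-- The centralizer of `r` in a (not necessarily unital) ring: `{s | r*s = s*r}`. -/
def rCentralizer {R : Type*} [NonUnitalRing R] (r : R) : Set R := {s | r * s = s * r}

/-- The set of all centralizers of elements of `R`. -/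
def Cent (R : Type*) [NonUnitalRing R] : Set (Set R) :=
  Set.range (fun r : R => rCentralizer r)

/-- The center of a (not necessarily unital) ring, as a set. -/
def rCenter (R : Type*) [NonUnitalRing R] : Set R := {s | ∀ r : R, r * s = s * r}

section

variable {R : Type*} [NonUnitalRing R]

theorem mem_rCentralizer_iff_commute {r s : R} : s ∈ rCentralizer r ↔ Commute r s := Iff.rfl

theorem not_commute_self_add {x y : R} (h : ¬Commute x y) : ¬Commute x (x + y) := fun hc =>
  h (by simpa using hc.sub_right (Commute.refl x))

theorem not_commute_add_self {x y : R} (h : ¬Commute x y) : ¬Commute y (x + y) := fun hc =>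
  h (by simpa using hc.sub_right (Commute.refl y) : Commute y x).symm

theorem rCentralizer_ne_of_not_commute {a b : R} (h : ¬Commute a b) :
    rCentralizer a ≠ rCentralizer b := fun e => by
  have ha : a ∈ rCentralizer b := e ▸ mem_rCentralizer_iff_commute.2 (Commute.refl a)
  exact h (mem_rCentralizer_iff_commute.1 ha).symm

theorem rCentralizer_zero_ne_of_not_commute {a b : R} (h : ¬Commute a b) :
    rCentralizer 0 ≠ rCentralizer a := fun e => by
  have hb : b ∈ rCentralizer a := e ▸ mem_rCentralizer_iff_commute.2 (Commute.zero_left b)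
  exact h (mem_rCentralizer_iff_commute.1 hb)

end

/-- For any noncommutative finite ring `R`, `|Cent(R)| ≥ 4`. -/
theorem four_le_ncard_cent (R : Type*) [NonUnitalRing R] [Finite R]
    (h : ∃ x y : R, x * y ≠ y * x) :
    4 ≤ (Cent R).ncard := by
  obtain ⟨x, y, hxy⟩ := h
  have hxy : ¬Commute x y := hxy
  have hx_xy := not_commute_self_add hxy
  have hy_xy := not_commute_add_self hxy
  calc 4 = ({rCentralizer 0, rCentralizer x, rCentralizer y, rCentralizer (x + y)} :
        Set (Set R)).ncard :=
      (Set.ncard_eq_four.2 ⟨_, _, _, _,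
        rCentralizer_zero_ne_of_not_commute hxy,
        rCentralizer_zero_ne_of_not_commute (fun hc => hxy hc.symm),
        rCentralizer_zero_ne_of_not_commute (fun hc => hx_xy hc.symm),
        rCentralizer_ne_of_not_commute hxy,
        rCentralizer_ne_of_not_commute hx_xy,
        rCentralizer_ne_of_not_commute hy_xy, rfl⟩).symm
    _ ≤ (Cent R).ncard :=
      Set.ncard_le_ncard (by rintro _ (rfl | rfl | rfl | rfl) <;> exact ⟨_, rfl⟩) (Set.toFinite _)
end

section
/- Let p be a prime and let R be a noncommutative (not necessarily unital) ring of order p². Then |Cent(R)| = p + 2. -/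
/-!
If the additive group of `R` were cyclic, `R` would be commutative; so every element has additive
order `p`, and `R` is a noncommutative two-dimensional algebra over `𝔽_p`. In such an algebra over
any field `K`, the centralizer of a noncentral `r` is a proper subspace containing `K ∙ r`, hence
equal to it. This forces the center to be `0`, so the centralizers are `R` itself (of `0`) and the
lines `K ∙ r`, which are the `|K| + 1` points of the projective line.
-/

open Module
open scoped LinearAlgebra.Projectivization

section AddGroup

variable {G : Type*} [AddGroup G] [Finite G]

theorem prime_nsmul_eq_zero_of_card_eq_sq {p : ℕ} (hp : p.Prime) (hcard : Nat.card G = p ^ 2)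
    (hG : ¬IsAddCyclic G) (x : G) : p • x = 0 := by
  obtain ⟨k, hk, hx⟩ := (Nat.dvd_prime_pow hp).mp (hcard ▸ addOrderOf_dvd_natCard x)
  have hk2 : k ≠ 2 := by
    rintro rfl
    exact hG (isAddCyclic_of_addOrderOf_eq_card x (hx.trans hcard.symm))
  rw [← addOrderOf_dvd_iff_nsmul_eq_zero, hx]
  exact (pow_dvd_pow p (by omega : k ≤ 1)).trans (pow_one p).dvd

end AddGroup

section NonUnitalNonAssocRing

variable {R : Type*} [NonUnitalNonAssocRing R]

theorem mul_comm_of_isAddCyclic [IsAddCyclic R] (x y : R) : x * y = y * x := by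
  obtain ⟨g, hg⟩ := IsAddCyclic.exists_generator (α := R)
  obtain ⟨m, rfl⟩ := hg x
  obtain ⟨n, rfl⟩ := hg y
  rw [smul_mul_assoc, mul_smul_comm, smul_mul_assoc, mul_smul_comm, smul_comm]

instance NonUnitalNonAssocRing.zmod_isScalarTower {n : ℕ} [Module (ZMod n) R] :
    IsScalarTower (ZMod n) R R where
  smul_assoc c a b := by
    obtain ⟨k, rfl⟩ := ZMod.intCast_surjective c
    simp only [Int.cast_smul_eq_zsmul, smul_eq_mul, smul_mul_assoc]

instance NonUnitalNonAssocRing.zmod_smulCommClass {n : ℕ} [Module (ZMod n) R] :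
    SMulCommClass (ZMod n) R R where
  smul_comm c a b := by
    obtain ⟨k, rfl⟩ := ZMod.intCast_surjective c
    simp only [Int.cast_smul_eq_zsmul, smul_eq_mul, mul_smul_comm]

end NonUnitalNonAssocRing

section Algebra

variable {K R : Type*} [Field K] [NonUnitalRing R] [Module K R] [IsScalarTower K R R]
  [SMulCommClass K R R]

theorem rCentralizer_eq_span_singleton_of_mul_ne (hR : finrank K R = 2) {r s : R}
    (hrs : r * s ≠ s * r) : rCentralizer r = (K ∙ r : Set R) := by
  have : FiniteDimensional K R := Module.finite_of_finrank_eq_succ hR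
  have hr : r ≠ 0 := by rintro rfl; simp at hrs
  set C := (NonUnitalSubalgebra.centralizer K {r}).toSubmodule
  have hCr : (C : Set R) = rCentralizer r := by
    ext t
    simp [C, Set.mem_centralizer_iff, rCentralizer]
  have hle : K ∙ r ≤ C := by
    rw [Submodule.span_singleton_le_iff_mem, ← SetLike.mem_coe, hCr]
    rfl
  have hC : C ≠ ⊤ := by
    rintro hC
    apply hrs
    have : s ∈ (C : Set R) := by simp [hC]
    rwa [hCr] at this
  have hspan : K ∙ r = C :=
    Submodule.eq_of_le_of_finrank_le hle
      (by have := Submodule.finrank_lt hC; rw [finrank_span_singleton hr]; omega)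
  rw [← hCr, hspan]

theorem eq_zero_of_mem_rCenter (hR : finrank K R = 2) (h : ∃ x y : R, x * y ≠ y * x)
    {z : R} (hz : z ∈ rCenter R) : z = 0 := by
  obtain ⟨x, y, hxy⟩ := h
  have hzx : z ∈ (K ∙ x : Set R) := by
    rw [← rCentralizer_eq_span_singleton_of_mul_ne hR hxy]
    exact hz x
  obtain ⟨c, rfl⟩ := Submodule.mem_span_singleton.mp hzx
  by_contra hz0
  have hc : c ≠ 0 := by rintro rfl; simp at hz0
  apply hxy
  rw [← inv_smul_smul₀ hc x, smul_mul_assoc, mul_smul_comm, hz y]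

theorem rCentralizer_eq_span_singleton (hR : finrank K R = 2) (h : ∃ x y : R, x * y ≠ y * x)
    {r : R} (hr : r ≠ 0) : rCentralizer r = (K ∙ r : Set R) := by
  obtain ⟨s, hs⟩ : ∃ s, r * s ≠ s * r := by
    by_contra! hcomm
    exact hr (eq_zero_of_mem_rCenter hR h fun s => (hcomm s).symm)
  exact rCentralizer_eq_span_singleton_of_mul_ne hR hs

theorem cent_eq_insert_range_submodule (hR : finrank K R = 2) (h : ∃ x y : R, x * y ≠ y * x) :
    Cent R = insert Set.univ (Set.range fun v : ℙ K R => (v.submodule : Set R)) := by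
  ext S
  constructor
  · rintro ⟨r, rfl⟩
    by_cases hr : r = 0
    · left; ext; simp [hr, rCentralizer]
    · right
      refine ⟨.mk K r hr, ?_⟩
      simp only [Projectivization.submodule_mk, rCentralizer_eq_span_singleton hR h hr]
  · rintro (rfl | ⟨v, rfl⟩)
    · exact ⟨0, by ext; simp [rCentralizer]⟩
    · refine ⟨v.rep, ?_⟩
      simp only [Projectivization.submodule_eq,
        rCentralizer_eq_span_singleton hR h v.rep_nonzero]

theorem ncard_cent_of_finrank_eq_two [Finite K] (hR : finrank K R = 2)
    (h : ∃ x y : R, x * y ≠ y * x) : (Cent R).ncard = Nat.card K + 2 := by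
  have : FiniteDimensional K R := Module.finite_of_finrank_eq_succ hR
  have : Finite R := Module.finite_of_finite K
  have hinj : Function.Injective fun v : ℙ K R => (v.submodule : Set R) :=
    SetLike.coe_injective.comp Projectivization.submodule_injective
  have huniv : Set.univ ∉ Set.range fun v : ℙ K R => (v.submodule : Set R) := by
    rintro ⟨v, hv⟩
    have := v.finrank_submodule
    rw [Submodule.coe_eq_univ.mp hv, finrank_top, hR] at this
    omega
  rw [cent_eq_insert_range_submodule hR h, Set.ncard_insert_of_notMem huniv,
    Set.ncard_range_of_injective hinj, Projectivization.card_of_finrank_two K R hR]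

end Algebra

/-- A noncommutative ring of order `p²` has exactly `p + 2` centralizers. -/
theorem cent_of_card_p_sq (p : ℕ) (hp : p.Prime) (R : Type*) [NonUnitalRing R] [Finite R]
    (hcard : Nat.card R = p ^ 2) (h : ∃ x y : R, x * y ≠ y * x) :
    (Cent R).ncard = p + 2 := by
  have : Fact p.Prime := ⟨hp⟩
  obtain ⟨x, y, hxy⟩ := h
  have hnc : ¬IsAddCyclic R := fun _ => hxy (mul_comm_of_isAddCyclic x y)
  have : Module (ZMod p) R :=
    AddCommGroup.zmodModule (prime_nsmul_eq_zero_of_card_eq_sq hp hcard hnc)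
  have hR : finrank (ZMod p) R = 2 := by
    have hpow : Nat.card R = Nat.card (ZMod p) ^ finrank (ZMod p) R :=
      Module.natCard_eq_pow_finrank
    rw [hcard, Nat.card_zmod] at hpow
    exact (Nat.pow_right_injective hp.two_le hpow).symm
  simpa [Nat.card_zmod] using ncard_cent_of_finrank_eq_two hR ⟨x, y, hxy⟩
end

section
/- Let p be a prime and let R be a noncommutative ring with unity of order p³. Then |Cent(R)| = p + 2. -/
/-!
Let `Z` be the center. For `r ∉ Z`, the subrings `Z < C(r) < R` have `p`-power orders, and
`1 < |Z|`, so `|Z| = p` and `|C(r)| = p²`. The subring generated by `Z` and `r` lies in `C(r)` and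
properly contains `Z`, hence equals `C(r)`; thus every `t` commuting with `r` commutes with all of
`C(r)`, and commuting noncentral elements have the same centralizer. So the noncentral
centralizers cut `R \ Z` into blocks `C(r) \ Z` of size `p² - p`; there are
`(p³ - p) / (p² - p) = p + 1` of them, and the centralizer of a central element is `R`.
-/

open Finset in
theorem Set.ncard_eq_mul_ncard_image_of_fibers {α β : Type*} {s : Set α} (hs : s.Finite)
    (f : α → β) {m : ℕ} (h : ∀ a ∈ s, {b ∈ s | f b = f a}.ncard = m) :
    s.ncard = m * (f '' s).ncard := by
  classical
  obtain ⟨t, rfl⟩ := hs.exists_finset_coe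
  have hfiber : ∀ b ∈ t.image f, #{a ∈ t | f a = b} = m := by
    rintro _ hb
    obtain ⟨a, ha, rfl⟩ := Finset.mem_image.1 hb
    rw [← h a ha, ← Set.ncard_coe_finset, Finset.coe_filter]
    rfl
  rw [← Finset.coe_image, Set.ncard_coe_finset, Set.ncard_coe_finset]
  exact (card_le_mul_card_image t _ fun b hb ↦ (hfiber b hb).le).antisymm
    (mul_card_image_le_card t _ fun b hb ↦ (hfiber b hb).ge)

namespace Subring

variable {R : Type*} [Ring R]

theorem mem_centralizer_singleton_iff {r s : R} : s ∈ centralizer {r} ↔ s * r = r * s := by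
  simp only [mem_centralizer_iff, Set.mem_singleton_iff, forall_eq]
  exact eq_comm

theorem mem_centralizer_singleton_comm {r s : R} :
    s ∈ centralizer {r} ↔ r ∈ centralizer {s} := by
  simp only [mem_centralizer_singleton_iff, eq_comm]

theorem self_mem_centralizer_singleton (r : R) : r ∈ centralizer {r} :=
  mem_centralizer_singleton_iff.2 rfl

theorem coe_centralizer_singleton_eq_univ_iff {r : R} :
    (centralizer {r} : Set R) = Set.univ ↔ r ∈ center R := by
  rw [← coe_top, SetLike.coe_set_eq, centralizer_eq_top_iff_subset, Set.singleton_subset_iff,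
    SetLike.mem_coe]

theorem centralizer_le_centralizer_of_mem {r s : R}
    (hr : centralizer {r} ≤ closure (insert r (center R))) (hs : s ∈ centralizer {r}) :
    centralizer {r} ≤ centralizer {s} := by
  intro t ht
  have : closure (insert r (center R)) ≤ centralizer {t} :=
    closure_le.2 <|
      Set.insert_subset (mem_centralizer_singleton_comm.1 ht) (center_le_centralizer _)
  exact mem_centralizer_singleton_comm.1 (this (hr hs))

theorem centralizer_eq_of_mem {r s : R}
    (hr : centralizer {r} ≤ closure (insert r (center R)))
    (hs : centralizer {s} ≤ closure (insert s (center R))) (hsr : s ∈ centralizer {r}) :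
    centralizer {r} = centralizer {s} :=
  (centralizer_le_centralizer_of_mem hr hsr).antisymm
    (centralizer_le_centralizer_of_mem hs (mem_centralizer_singleton_comm.1 hsr))

theorem centralizer_eq_iff_mem
    (hgen : ∀ r ∉ center R, centralizer {r} ≤ closure (insert r (center R))) {r s : R}
    (hr : r ∉ center R) (hs : s ∉ center R) :
    centralizer {s} = centralizer {r} ↔ s ∈ centralizer {r} :=
  ⟨fun h ↦ h ▸ self_mem_centralizer_singleton s,
    fun hsr ↦ (centralizer_eq_of_mem (hgen r hr) (hgen s hs) hsr).symm⟩

theorem exists_card_eq_prime_pow {p n : ℕ} (hp : p.Prime) (hcard : Nat.card R = p ^ n)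
    (S : Subring R) : ∃ k ≤ n, Nat.card S = p ^ k :=
  (Nat.dvd_prime_pow hp).1 (hcard ▸ AddSubgroup.card_addSubgroup_dvd_card S.toAddSubgroup)

variable [Finite R]

theorem card_lt_card {S T : Subring R} (h : S < T) : Nat.card S < Nat.card T :=
  Set.card_strictMono (SetLike.coe_strictMono h)

theorem card_center_eq_and_card_centralizer_eq {p : ℕ} (hp : p.Prime)
    (hcard : Nat.card R = p ^ 3) {r : R} (hr : r ∉ center R) :
    Nat.card (center R) = p ∧ Nat.card (centralizer {r}) = p ^ 2 := by
  have : Nontrivial R := ⟨⟨r, 0, by rintro rfl; exact hr (zero_mem _)⟩⟩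
  obtain ⟨a, -, ha⟩ := exists_card_eq_prime_pow hp hcard (center R)
  obtain ⟨b, -, hb⟩ := exists_card_eq_prime_pow hp hcard (centralizer {r})
  have h0a : p ^ 0 < p ^ a := ha ▸ Finite.one_lt_card
  have hab : p ^ a < p ^ b := by
    rw [← ha, ← hb]
    exact card_lt_card <|
      (center_le_centralizer _).lt_of_ne fun h ↦ hr (h ▸ self_mem_centralizer_singleton r)
  have hb3 : p ^ b < p ^ 3 := by
    rw [← hb, ← hcard, ← Nat.card_congr (topEquiv (R := R)).toEquiv]
    exact card_lt_card <| lt_top_iff_ne_top.2 fun h ↦ hr (centralizer_eq_top_iff_subset.1 h rfl)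
  simp only [Nat.pow_lt_pow_iff_right hp.one_lt] at h0a hab hb3
  obtain rfl : a = 1 := by omega
  obtain rfl : b = 2 := by omega
  exact ⟨ha.trans (pow_one p), hb⟩

theorem centralizer_le_closure {p : ℕ} (hp : p.Prime) (hcard : Nat.card R = p ^ 3) {r : R}
    (hr : r ∉ center R) : centralizer {r} ≤ closure (insert r (center R)) := by
  set A := closure (insert r (center R))
  have hAC : A ≤ centralizer {r} :=
    closure_le.2 (Set.insert_subset (self_mem_centralizer_singleton r) (center_le_centralizer _))
  have hrA : r ∈ A := subset_closure (Set.mem_insert r _)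
  have hZA : center R < A :=
    (show center R ≤ A from fun z hz ↦ subset_closure (Set.mem_insert_of_mem r hz)).lt_of_ne
      fun h ↦ hr (h ▸ hrA)
  obtain ⟨hZ, hC⟩ := card_center_eq_and_card_centralizer_eq hp hcard hr
  obtain ⟨c, -, hc⟩ := exists_card_eq_prime_pow hp hcard A
  have h1c : p ^ 1 < p ^ c := by rw [← hc, pow_one, ← hZ]; exact card_lt_card hZA
  have hc2 : p ^ c ≤ p ^ 2 := by rw [← hc, ← hC]; exact Nat.card_mono (Set.toFinite _) hAC
  rw [Nat.pow_lt_pow_iff_right hp.one_lt] at h1c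
  rw [Nat.pow_le_pow_iff_right hp.one_lt] at hc2
  obtain rfl : c = 2 := by omega
  exact (SetLike.coe_injective
    (Set.toFinite _ |>.eq_of_subset_of_card_le hAC (hC.trans hc.symm).le)).ge

theorem ncard_image_centralizer_compl_center {p : ℕ} (hp : p.Prime) (hcard : Nat.card R = p ^ 3)
    (hR : center R ≠ ⊤) :
    ((fun r : R ↦ (centralizer {r} : Set R)) '' (center R : Set R)ᶜ).ncard = p + 1 := by
  obtain ⟨r₀, -, hr₀⟩ := SetLike.exists_of_lt hR.lt_top
  have hZ : (center R : Set R).ncard = p := by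
    rw [← Nat.card_coe_set_eq]; exact (card_center_eq_and_card_centralizer_eq hp hcard hr₀).1
  have hfiber : ∀ r ∈ (center R : Set R)ᶜ, {s ∈ (center R : Set R)ᶜ |
      (centralizer {s} : Set R) = centralizer {r}}.ncard = p ^ 2 - p := by
    intro r hr
    have : {s ∈ (center R : Set R)ᶜ | (centralizer {s} : Set R) = centralizer {r}} =
        (centralizer {r} : Set R) \ center R := by
      ext s
      simp only [Set.mem_ofPred_eq, Set.mem_compl_iff, Set.mem_sdiff, SetLike.mem_coe,
        SetLike.coe_set_eq, and_comm (a := s ∈ centralizer {r})]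
      exact and_congr_right
        (centralizer_eq_iff_mem (fun r hr ↦ centralizer_le_closure hp hcard hr) hr)
    rw [this, Set.ncard_sdiff (center_le_centralizer _), hZ, ← Nat.card_coe_set_eq,
      SetLike.coe_sort_coe, (card_center_eq_and_card_centralizer_eq hp hcard hr).2]
  have hcompl : (center R : Set R)ᶜ.ncard = p ^ 3 - p := by rw [Set.ncard_compl, hcard, hZ]
  have hpos : 0 < p ^ 2 - p := Nat.sub_pos_of_lt (lt_self_pow₀ hp.one_lt one_lt_two)
  have harith : (p ^ 2 - p) * (p + 1) = p ^ 3 - p := by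
    have h2 : p ≤ p ^ 2 := Nat.le_self_pow two_ne_zero p
    have h3 : p ≤ p ^ 3 := Nat.le_self_pow three_ne_zero p
    zify [h2, h3]
    ring
  refine Nat.eq_of_mul_eq_mul_left hpos ?_
  rw [harith, ← hcompl]
  exact (Set.ncard_eq_mul_ncard_image_of_fibers (Set.toFinite _) _ hfiber).symm

end Subring

open Subring

theorem rCentralizer_eq_centralizer {R : Type*} [Ring R] (r : R) :
    rCentralizer r = centralizer {r} := by
  ext s
  exact eq_comm.trans mem_centralizer_singleton_iff.symm

theorem cent_eq_insert_univ (R : Type*) [Ring R] :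
    Cent R =
      insert Set.univ ((fun r : R ↦ (centralizer {r} : Set R)) '' (center R : Set R)ᶜ) := by
  ext C
  simp only [Cent, rCentralizer_eq_centralizer, Set.mem_insert_iff, Set.mem_image,
    Set.mem_compl_iff, SetLike.mem_coe]
  constructor
  · rintro ⟨r, rfl⟩
    by_cases hr : r ∈ center R
    · exact Or.inl (coe_centralizer_singleton_eq_univ_iff.2 hr)
    · exact Or.inr ⟨r, hr, rfl⟩
  · rintro (rfl | ⟨r, -, rfl⟩)
    · exact ⟨0, coe_centralizer_singleton_eq_univ_iff.2 (zero_mem _)⟩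
    · exact ⟨r, rfl⟩

/-- A noncommutative ring with unity of order `p³` has exactly `p + 2` centralizers. -/
theorem cent_of_card_p_cube (p : ℕ) (hp : p.Prime) (R : Type*) [Ring R] [Finite R]
    (hcard : Nat.card R = p ^ 3) (h : ∃ x y : R, x * y ≠ y * x) :
    (Cent R).ncard = p + 2 := by
  obtain ⟨x, y, hxy⟩ := h
  have hR : center R ≠ ⊤ := fun hZ ↦ hxy (mem_center_iff.1 (hZ ▸ mem_top y) x)
  have huniv : Set.univ ∉ (fun r : R ↦ (centralizer {r} : Set R)) '' (center R : Set R)ᶜ :=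
    fun ⟨_, hr, h⟩ ↦ hr (coe_centralizer_singleton_eq_univ_iff.1 h)
  rw [cent_eq_insert_univ, Set.ncard_insert_of_notMem huniv (Set.toFinite _),
    ncard_image_centralizer_compl_center hp hcard hR]
end

section
/- Let R be a finite (not necessarily unital) ring with |Cent(R)| = 4. Then at least one of the centralizers of a non-central element of R has additive index 2 in R, i.e., there exists r ∈ R \ Z(R) with |R : C(r)| = 2. -/
/-- The centralizer of `r`, as an additive subgroup. -/
def centralizerAddSubgroup {R : Type*} [NonUnitalRing R] (r : R) : AddSubgroup R where
  carrier := {s | r * s = s * r}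
  zero_mem' := by rw [Set.mem_setOf_eq, mul_zero, zero_mul]
  add_mem' := by intro a b ha hb; simp only [Set.mem_setOf_eq] at *; rw [mul_add, add_mul, ha, hb]
  neg_mem' := by intro a ha; simp only [Set.mem_setOf_eq] at *; rw [mul_neg, neg_mul, ha]

namespace AddSubgroup

variable {G : Type*} [AddGroup G] {A B C : AddSubgroup G}

theorem exists_notMem_notMem_of_ne_top (hB : B ≠ ⊤) (hC : C ≠ ⊤) : ∃ x, x ∉ B ∧ x ∉ C := by
  by_contra! h
  rcases AddSubgroupClass.subset_union.1 (fun x (_ : x ∈ (⊤ : AddSubgroup G)) ↦ (em (x ∈ B)).imp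
    id (h x)) with hB' | hC'
  exacts [hB (top_le_iff.1 hB'), hC (top_le_iff.1 hC')]

theorem inf_le_of_cover (cov : ∀ x, x ∈ A ∨ x ∈ B ∨ x ∈ C) {a : G} (haB : a ∉ B) (haC : a ∉ C) :
    B ⊓ C ≤ A := by
  intro x ⟨hxB, hxC⟩
  rcases cov (x + a) with h | h | h
  · simpa using A.sub_mem h ((cov a).resolve_right (by tauto))
  · exact absurd (by simpa using B.sub_mem (B.neg_mem hxB) (B.neg_mem h)) haB
  · exact absurd (by simpa using C.sub_mem (C.neg_mem hxC) (C.neg_mem h)) haC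

theorem sub_mem_of_inf_le (hBC : B ⊓ C ≤ A) {x y : G} (hxB : x ∈ B) (hxA : x ∉ A) (hyC : y ∈ C)
    (hyA : y ∉ A) (cov : x - y ∈ A ∨ x - y ∈ B ∨ x - y ∈ C) : x - y ∈ A := by
  rcases cov with h | h | h
  · exact h
  · exact absurd (hBC ⟨by simpa using B.add_mem (B.neg_mem h) hxB, hyC⟩) hyA
  · exact absurd (hBC ⟨hxB, by simpa using C.add_mem h hyC⟩) hxA

/-- Scorza's theorem. -/
theorem index_eq_two_of_cover (hA : A ≠ ⊤) (hB : B ≠ ⊤) (hC : C ≠ ⊤)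
    (cov : ∀ x, x ∈ A ∨ x ∈ B ∨ x ∈ C) : A.index = 2 := by
  obtain ⟨a, haB, haC⟩ := exists_notMem_notMem_of_ne_top hB hC
  obtain ⟨b, hbA, hbC⟩ := exists_notMem_notMem_of_ne_top hA hC
  obtain ⟨c, hcA, hcB⟩ := exists_notMem_notMem_of_ne_top hA hB
  have hbB : b ∈ B := by rcases cov b with h | h | h <;> tauto
  have hcC : c ∈ C := by rcases cov c with h | h | h <;> tauto
  have hBC := inf_le_of_cover cov haB haC
  have hCB : C ⊓ B ≤ A := inf_comm B C ▸ hBC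
  have hbc : b - c ∈ A := sub_mem_of_inf_le hBC hbB hbA hcC hcA (cov _)
  refine index_eq_two_iff_exists_notMem_and.2 ⟨-c, by simpa using hcA, fun x ↦ ?_⟩
  rw [← sub_eq_add_neg]
  by_cases hxA : x ∈ A
  · exact Or.inr hxA
  refine Or.inl ?_
  rcases (cov x).resolve_left hxA with hxB | hxC
  · exact sub_mem_of_inf_le hBC hxB hxA hcC hcA (cov _)
  · rw [← sub_add_sub_cancel x b c]
    exact A.add_mem (sub_mem_of_inf_le hCB hxC hxA hbB hbA ((cov _).imp_right Or.symm)) hbc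

end AddSubgroup

section Centralizers

variable {R : Type*} [NonUnitalRing R]

theorem self_mem_rCentralizer (r : R) : r ∈ rCentralizer r := rfl

theorem rCentralizer_eq_univ_iff {r : R} : rCentralizer r = Set.univ ↔ r ∈ rCenter R := by
  simp only [Set.eq_univ_iff_forall, rCentralizer, rCenter, Set.mem_ofPred_eq]
  exact forall_congr' fun _ ↦ eq_comm

theorem centralizerAddSubgroup_ne_top {r : R} (hr : r ∉ rCenter R) :
    centralizerAddSubgroup r ≠ ⊤ := by
  rw [← rCentralizer_eq_univ_iff] at hr
  exact fun htop ↦ hr (congrArg SetLike.coe htop)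

theorem univ_mem_Cent : Set.univ ∈ Cent R :=
  ⟨0, rCentralizer_eq_univ_iff.2 fun r ↦ by simp⟩

theorem mem_Cent_diff_univ_iff {X : Set R} :
    X ∈ Cent R \ {Set.univ} ↔ ∃ r, r ∉ rCenter R ∧ rCentralizer r = X := by
  constructor
  · rintro ⟨⟨r, rfl⟩, hX⟩
    exact ⟨r, mt rCentralizer_eq_univ_iff.2 hX, rfl⟩
  · rintro ⟨r, hr, rfl⟩
    exact ⟨⟨r, rfl⟩, mt rCentralizer_eq_univ_iff.1 hr⟩

theorem exists_mem_Cent_diff_univ {r : R} (hr : r ∉ rCenter R) (s : R) :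
    ∃ X ∈ Cent R \ {Set.univ}, s ∈ X := by
  by_cases hs : s ∈ rCenter R
  · exact ⟨rCentralizer r, mem_Cent_diff_univ_iff.2 ⟨r, hr, rfl⟩, hs r⟩
  · exact ⟨rCentralizer s, mem_Cent_diff_univ_iff.2 ⟨s, hs, rfl⟩, self_mem_rCentralizer s⟩

end Centralizers

theorem exists_index_two_centralizer_general (R : Type*) [NonUnitalRing R]
    (h : (Cent R).ncard = 4) :
    ∃ r : R, r ∉ rCenter R ∧ (centralizerAddSubgroup r).index = 2 := by
  have h3 : (Cent R \ {Set.univ}).ncard = 3 := by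
    rw [Set.ncard_sdiff_singleton_of_mem univ_mem_Cent, h]
  obtain ⟨X, Y, Z, -, -, -, hXYZ⟩ := Set.ncard_eq_three.1 h3
  obtain ⟨x, hx, rfl⟩ := mem_Cent_diff_univ_iff.1 (hXYZ ▸ by simp : X ∈ Cent R \ {Set.univ})
  obtain ⟨y, hy, rfl⟩ := mem_Cent_diff_univ_iff.1 (hXYZ ▸ by simp : Y ∈ Cent R \ {Set.univ})
  obtain ⟨z, hz, rfl⟩ := mem_Cent_diff_univ_iff.1 (hXYZ ▸ by simp : Z ∈ Cent R \ {Set.univ})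
  refine ⟨x, hx, AddSubgroup.index_eq_two_of_cover (centralizerAddSubgroup_ne_top hx)
    (centralizerAddSubgroup_ne_top hy) (centralizerAddSubgroup_ne_top hz) fun s ↦ ?_⟩
  obtain ⟨W, hW, hsW⟩ := exists_mem_Cent_diff_univ hx s
  rw [hXYZ] at hW
  rcases hW with rfl | rfl | rfl
  exacts [Or.inl hsW, Or.inr (Or.inl hsW), Or.inr (Or.inr hsW)]

/-- In a finite `4`-centralizer ring, some centralizer of a non-central element has
additive index `2`. -/
theorem exists_index_two_centralizer (R : Type*) [NonUnitalRing R] [Finite R]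
    (h : (Cent R).ncard = 4) :
    ∃ r : R, r ∉ rCenter R ∧ (centralizerAddSubgroup r).index = 2 :=
  exists_index_two_centralizer_general R h
end

section
/- Let R be a (not necessarily unital) ring which is the union R = A ∪ B ∪ C of three proper, pairwise distinct subrings A, B, C. Let K = A ∩ B ∩ C, A' = A \ (B ∪ C), B' = B \ (A ∪ C), C' = C \ (A ∪ B). Then A' + B' ⊆ C', B' + C' ⊆ A', C' + A' ⊆ B', and moreover A' + A' ⊆ K, B' + B' ⊆ K, C' + C' ⊆ K. -/
/-!
Only the additive structure matters. For `x ∈ A'` and `y ∈ B'`, the sum `x + y` lies neither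
in `A` (else `y ∈ A`) nor in `B` (else `x ∈ B`), so it lies in `C'`. For `x, y ∈ A'`, pick
`b ∈ B'`, which exists because a group is never the union of two proper subgroups. Then
`x + b ∈ C'` and `x + b + y ∈ B'`, so `x + y = (x + b + y) - b ∈ B`; symmetrically `x + y ∈ C`.
-/

open Pointwise Set

namespace AddSubgroupClass

variable {G S : Type*} [SetLike S G]

section AddGroup

variable [AddGroup G] [AddSubgroupClass S G] {A B C : S}

theorem union_ne_univ (hA : (A : Set G) ≠ univ) (hC : (C : Set G) ≠ univ) :
    (A : Set G) ∪ C ≠ univ := by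
  intro hcover
  obtain ⟨x, hxA⟩ := (ne_univ_iff_exists_notMem _).1 hA
  have mem_C_of_notMem_A : ∀ g : G, g ∉ A → g ∈ C := fun g hg =>
    ((hcover ▸ mem_univ g : g ∈ (A : Set G) ∪ C)).resolve_left hg
  refine hC (eq_univ_of_forall fun g => ?_)
  by_cases hgA : g ∈ A
  · have hgxA : g + x ∉ A := fun h => hxA ((add_mem_cancel_left hgA).1 h)
    exact (add_mem_cancel_right (mem_C_of_notMem_A x hxA)).1 (mem_C_of_notMem_A _ hgxA)
  · exact mem_C_of_notMem_A g hgA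

variable (hcover : (A : Set G) ∪ B ∪ C = univ)
include hcover

theorem nonempty_diff_union (hA : (A : Set G) ≠ univ) (hC : (C : Set G) ≠ univ) :
    ((B : Set G) \ (A ∪ C)).Nonempty := by
  rw [nonempty_iff_ne_empty, Ne, sdiff_eq_empty]
  intro hB
  apply union_ne_univ hA hC
  rwa [← union_eq_left.2 hB, union_right_comm]

theorem add_diff_subset_diff :
    (A : Set G) \ (B ∪ C) + (B : Set G) \ (A ∪ C) ⊆ (C : Set G) \ (A ∪ B) := by
  rintro _ ⟨x, ⟨hxA, hxBC⟩, y, ⟨hyB, hyAC⟩, rfl⟩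
  have hA : x + y ∉ A := fun h => hyAC (Or.inl ((add_mem_cancel_left hxA).1 h))
  have hB : x + y ∉ B := fun h => hxBC (Or.inl ((add_mem_cancel_right hyB).1 h))
  have hcov : x + y ∈ (A : Set G) ∪ B ∪ C := hcover ▸ mem_univ _
  simp only [mem_sdiff, mem_union, SetLike.mem_coe] at hcov ⊢
  tauto

end AddGroup

variable [AddCommGroup G] [AddSubgroupClass S G] {A B C : S}
  (hcover : (A : Set G) ∪ B ∪ C = univ)
include hcover

theorem add_diff_self_subset (hA : (A : Set G) ≠ univ) (hC : (C : Set G) ≠ univ) :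
    (A : Set G) \ (B ∪ C) + (A : Set G) \ (B ∪ C) ⊆ B := by
  rintro _ ⟨x, hx, y, hy, rfl⟩
  obtain ⟨b, hb⟩ := nonempty_diff_union hcover hA hC
  have hxb : x + b ∈ (C : Set G) \ (A ∪ B) := add_diff_subset_diff hcover (add_mem_add hx hb)
  have hcoverCAB : (C : Set G) ∪ A ∪ B = univ := by rw [← hcover]; ac_rfl
  have hxby : x + b + y ∈ (B : Set G) \ (C ∪ A) :=
    add_diff_subset_diff hcoverCAB (add_mem_add hxb (by rwa [union_comm]))
  show x + y ∈ B
  rw [show x + y = x + b + y - b by abel]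
  exact sub_mem hxby.1 hb.1

theorem add_diff_self_subset_inter (hA : (A : Set G) ≠ univ) (hB : (B : Set G) ≠ univ)
    (hC : (C : Set G) ≠ univ) :
    (A : Set G) \ (B ∪ C) + (A : Set G) \ (B ∪ C) ⊆ A ∩ B ∩ C := by
  have hcoverACB : (A : Set G) ∪ C ∪ B = univ := by rw [← hcover]; ac_rfl
  rintro _ ⟨x, hx, y, hy, rfl⟩
  refine ⟨⟨add_mem hx.1 hy.1, add_diff_self_subset hcover hA hC ⟨x, hx, y, hy, rfl⟩⟩,
    ?_⟩
  rw [union_comm] at hx hy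
  exact add_diff_self_subset hcoverACB hA hB ⟨x, hx, y, hy, rfl⟩

end AddSubgroupClass

open AddSubgroupClass

theorem union_three_subrings_sumsets_general (R : Type*) [NonUnitalRing R]
    (A B C : NonUnitalSubring R) (hA : A ≠ ⊤) (hB : B ≠ ⊤) (hC : C ≠ ⊤)
    (hcover : (A : Set R) ∪ (B : Set R) ∪ (C : Set R) = Set.univ)
    (K A' B' C' : Set R)
    (hK : K = (A : Set R) ∩ (B : Set R) ∩ (C : Set R))
    (hA' : A' = (A : Set R) \ ((B : Set R) ∪ (C : Set R)))
    (hB' : B' = (B : Set R) \ ((A : Set R) ∪ (C : Set R)))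
    (hC' : C' = (C : Set R) \ ((A : Set R) ∪ (B : Set R))) :
    A' + B' ⊆ C' ∧ B' + C' ⊆ A' ∧ C' + A' ⊆ B' ∧
      A' + A' ⊆ K ∧ B' + B' ⊆ K ∧ C' + C' ⊆ K := by
  subst hK hA' hB' hC'
  have proper : ∀ X : NonUnitalSubring R, X ≠ ⊤ → (X : Set R) ≠ univ := fun X hX => by
    rwa [Ne, ← NonUnitalSubring.coe_top, SetLike.coe_set_eq]
  have hcoverBCA : (B : Set R) ∪ C ∪ A = univ := by rw [← hcover]; ac_rfl
  have hcoverCAB : (C : Set R) ∪ A ∪ B = univ := by rw [← hcover]; ac_rfl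
  have hcoverBAC : (B : Set R) ∪ A ∪ C = univ := by rw [← hcover]; ac_rfl
  refine ⟨add_diff_subset_diff hcover, ?_, ?_,
    add_diff_self_subset_inter hcover (proper A hA) (proper B hB) (proper C hC), ?_, ?_⟩
  · rw [union_comm (A : Set R) C, union_comm (A : Set R) B]
    exact add_diff_subset_diff hcoverBCA
  · rw [union_comm (B : Set R) C, union_comm (A : Set R) C]
    exact add_diff_subset_diff hcoverCAB
  · rw [inter_comm (A : Set R) B]
    exact add_diff_self_subset_inter hcoverBAC (proper B hB) (proper A hA) (proper C hC)
  · rw [inter_comm, ← inter_assoc]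
    exact add_diff_self_subset_inter hcoverCAB (proper C hC) (proper A hA) (proper B hB)

/-- If a ring is the union of three proper, pairwise distinct subrings `A`, `B`, `C`,
with `K = A ∩ B ∩ C`, `A' = A \ (B ∪ C)`, `B' = B \ (A ∪ C)`, `C' = C \ (A ∪ B)`, then
`A' + B' ⊆ C'`, `B' + C' ⊆ A'`, `C' + A' ⊆ B'`, and `A' + A' ⊆ K`, `B' + B' ⊆ K`,
`C' + C' ⊆ K`. -/
theorem union_three_subrings_sumsets (R : Type*) [NonUnitalRing R]
    (A B C : NonUnitalSubring R) (hA : A ≠ ⊤) (hB : B ≠ ⊤) (hC : C ≠ ⊤)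
    (hAB : A ≠ B) (hAC : A ≠ C) (hBC : B ≠ C)
    (hcover : (A : Set R) ∪ (B : Set R) ∪ (C : Set R) = Set.univ)
    (K A' B' C' : Set R)
    (hK : K = (A : Set R) ∩ (B : Set R) ∩ (C : Set R))
    (hA' : A' = (A : Set R) \ ((B : Set R) ∪ (C : Set R)))
    (hB' : B' = (B : Set R) \ ((A : Set R) ∪ (C : Set R)))
    (hC' : C' = (C : Set R) \ ((A : Set R) ∪ (B : Set R))) :
    A' + B' ⊆ C' ∧ B' + C' ⊆ A' ∧ C' + A' ⊆ B' ∧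
      A' + A' ⊆ K ∧ B' + B' ⊆ K ∧ C' + C' ⊆ K :=
  union_three_subrings_sumsets_general R A B C hA hB hC hcover K A' B' C' hK hA' hB' hC'
end
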